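/- arXiv:1805.00256 — 4 statements merged into one kernel-verified Lean document; each statement's English description precedes it below -/
import Mathlib

section
/- Let σ > 0 and ξ < 0, and let F be the CDF of the generalized Pareto distribution GP(σ, ξ). Then the monopoly revenue function R(x) = x·(1 − F(x)) on [0, −σ/ξ] attains its maximum at the unique point r* = σ/(1 − ξ); in particular the optimal reserve price for a GP(σ, ξ) bidder equals the mean σ/(1 − ξ) of the distribution. -/
/-!
After the substitution `M = -σ/ξ`, `p = -1/ξ` the revenue is `x ↦ x (1 - x/M)^p` on `[0, M]`.
Its derivative `(1 - x/M)^(p-1) (1 - (p+1) x / M)` is positive before `M/(p+1)` and negative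
after it, and `M/(p+1) = σ/(1-ξ)`.
-/

open Set

section PowerRevenue

variable {M p : ℝ}

theorem div_add_one_mem_Icc (hM : 0 ≤ M) (hp : 0 ≤ p) : M / (p + 1) ∈ Icc 0 M :=
  ⟨by positivity, div_le_self hM (by linarith)⟩

theorem hasDerivAt_mul_one_sub_div_rpow {x : ℝ} (hM : 0 < M) (hx : x < M) :
    HasDerivAt (fun y => y * (1 - y / M) ^ p) ((1 - x / M) ^ (p - 1) * (1 - (p + 1) * x / M)) x := by
  have hb : 0 < 1 - x / M := by rwa [sub_pos, div_lt_one hM]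
  have hinner : HasDerivAt (fun y : ℝ => 1 - y / M) (-(1 / M)) x := by
    simpa using ((hasDerivAt_id x).div_const M).const_sub 1
  have hpow := (Real.hasDerivAt_rpow_const (p := p) (Or.inl hb.ne')).comp x hinner
  refine ((hasDerivAt_id x).mul hpow).congr_deriv ?_
  have hsplit : (1 - x / M) ^ p = (1 - x / M) ^ (p - 1) * (1 - x / M) := by
    rw [← Real.rpow_add_one hb.ne']; ring_nf
  simp only [Function.comp_apply, id, hsplit]
  field_simp
  ring

theorem continuous_mul_one_sub_div_rpow (hp : 0 ≤ p) :
    Continuous fun y : ℝ => y * (1 - y / M) ^ p :=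
  continuous_id.mul ((continuous_const.sub (continuous_id.div_const M)).rpow_const
    fun _ => Or.inr hp)

theorem strictMonoOn_mul_one_sub_div_rpow (hM : 0 < M) (hp : 0 ≤ p) :
    StrictMonoOn (fun y => y * (1 - y / M) ^ p) (Icc 0 (M / (p + 1))) := by
  refine strictMonoOn_of_deriv_pos (convex_Icc _ _)
    (continuous_mul_one_sub_div_rpow hp).continuousOn fun x hx => ?_
  rw [interior_Icc] at hx
  have hxr : (p + 1) * x < M := by
    have := hx.2; rw [lt_div_iff₀ (by linarith)] at this; linarith
  have hxM : x < M := by nlinarith [hx.1]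
  rw [(hasDerivAt_mul_one_sub_div_rpow hM hxM).deriv]
  refine mul_pos (Real.rpow_pos_of_pos ?_ _) ?_
  · rwa [sub_pos, div_lt_one hM]
  · rwa [sub_pos, div_lt_one hM]

theorem strictAntiOn_mul_one_sub_div_rpow (hM : 0 < M) (hp : 0 ≤ p) :
    StrictAntiOn (fun y => y * (1 - y / M) ^ p) (Icc (M / (p + 1)) M) := by
  refine strictAntiOn_of_deriv_neg (convex_Icc _ _)
    (continuous_mul_one_sub_div_rpow hp).continuousOn fun x hx => ?_
  rw [interior_Icc] at hx
  have hxr : M < (p + 1) * x := by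
    have := hx.1; rw [div_lt_iff₀ (by linarith)] at this; linarith
  rw [(hasDerivAt_mul_one_sub_div_rpow hM hx.2).deriv]
  refine mul_neg_of_pos_of_neg (Real.rpow_pos_of_pos ?_ _) ?_
  · rw [sub_pos, div_lt_one hM]; exact hx.2
  · rwa [sub_neg, lt_div_iff₀ hM, one_mul]

theorem mul_one_sub_div_rpow_lt_of_ne {x : ℝ} (hM : 0 < M) (hp : 0 ≤ p) (hx : x ∈ Icc 0 M)
    (hne : x ≠ M / (p + 1)) :
    x * (1 - x / M) ^ p < M / (p + 1) * (1 - M / (p + 1) / M) ^ p := by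
  obtain ⟨hr0, hrM⟩ := div_add_one_mem_Icc hM.le hp
  rcases hne.lt_or_gt with hlt | hgt
  · exact strictMonoOn_mul_one_sub_div_rpow hM hp ⟨hx.1, hlt.le⟩ ⟨hr0, le_rfl⟩ hlt
  · exact strictAntiOn_mul_one_sub_div_rpow hM hp ⟨le_rfl, hrM⟩ ⟨hgt.le, hx.2⟩ hgt

end PowerRevenue

/-- For the generalized Pareto distribution GP(σ, ξ) with σ > 0, ξ < 0 and CDF
F(x) = 1 - (1 + ξx/σ)^(-1/ξ), the monopoly revenue R(x) = x(1 - F(x)) on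
[0, -σ/ξ] is maximized at the unique point r* = σ/(1-ξ), which equals the mean. -/
theorem gp_monopoly_price (σ ξ : ℝ) (hσ : 0 < σ) (hξ : ξ < 0)
    (F R : ℝ → ℝ)
    (hF : ∀ x, F x = 1 - (1 + ξ*x/σ) ^ (-1/ξ))
    (hR : ∀ x, R x = x * (1 - F x)) :
    σ / (1 - ξ) ∈ Set.Icc (0 : ℝ) (-σ/ξ) ∧
    (∀ x ∈ Set.Icc (0 : ℝ) (-σ/ξ), R x ≤ R (σ / (1 - ξ))) ∧
    (∀ x ∈ Set.Icc (0 : ℝ) (-σ/ξ), R x = R (σ / (1 - ξ)) → x = σ / (1 - ξ)) := by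
  have hM : 0 < -σ / ξ := div_pos_of_neg_of_neg (by linarith) hξ
  have hp : 0 ≤ -1 / ξ := div_nonneg_of_nonpos (by norm_num) hξ.le
  have hR' : ∀ x, R x = x * (1 - x / (-σ / ξ)) ^ (-1 / ξ) := fun x => by
    rw [hR, hF, sub_sub_cancel]
    congr 2
    field_simp
    ring
  have hr : σ / (1 - ξ) = -σ / ξ / (-1 / ξ + 1) := by
    rw [div_add_one hξ.ne, div_div_div_cancel_right₀ hξ.ne, ← neg_div_neg_eq]
    ring_nf
  have hlt : ∀ x ∈ Icc 0 (-σ / ξ), x ≠ σ / (1 - ξ) → R x < R (σ / (1 - ξ)) := by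
    intro x hx hne
    rw [hr] at hne ⊢
    rw [hR', hR']
    exact mul_one_sub_div_rpow_lt_of_ne hM hp hx hne
  refine ⟨hr ▸ div_add_one_mem_Icc hM.le hp,
    fun x hx => ?_, fun x hx heq => by_contra fun hne => (hlt x hx hne).ne heq⟩
  rcases eq_or_ne x (σ / (1 - ξ)) with rfl | hne
  · exact le_rfl
  · exact (hlt x hx hne).le
end

section
/- Let F be a CDF with positive continuous density f on an interval (a, b) with F(x) < 1 for x ∈ (a, b), let h : (a, b) → ℝ be continuous, and define g(x) = (∫ₓᵇ h(u)·f(u) du) / (1 − F(x)) for x ∈ (a, b). Then g is differentiable on (a, b) and satisfies the first-order ODE g(x) + g'(x)·(φ(x) − x) = h(x), where φ(x) = x − (1 − F(x))/f(x); equivalently, g(x) − g'(x)·(1 − F(x))/f(x) = h(x). -/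
open MeasureTheory intervalIntegral

/-! By the fundamental theorem of calculus and the quotient rule, the tail average
`g = (∫ₓᵇ h f) / (1 - F)` has derivative `g' = f (g - h) / (1 - F)`, which is the ODE
`g - g' (1 - F) / f = h` solved for `g'`. -/

theorem hasDerivAt_integral_left_of_continuousOn {φ : ℝ → ℝ} {s : Set ℝ} {x b : ℝ}
    (hs : IsOpen s) (hx : x ∈ s) (hφ : ContinuousOn φ s)
    (hint : IntervalIntegrable φ volume x b) :
    HasDerivAt (fun y => ∫ u in y..b, φ u) (-φ x) x :=
  integral_hasDerivAt_left hint (hφ.stronglyMeasurableAtFilter hs x hx)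
    (hφ.continuousAt (hs.mem_nhds hx))

theorem HasDerivAt.div_one_sub {I F : ℝ → ℝ} {i f x : ℝ} (hI : HasDerivAt I (-i) x)
    (hF : HasDerivAt F f x) (hden : 1 - F x ≠ 0) :
    HasDerivAt (fun y => I y / (1 - F y)) ((f * (I x / (1 - F x)) - i) / (1 - F x)) x := by
  refine (hI.div (hF.const_sub 1) hden).congr_deriv ?_
  field_simp
  ring

theorem shading_ode_solution_general
    (a b : ℝ) (F f h g : ℝ → ℝ)
    (hFderiv : ∀ x ∈ Set.Ioo a b, HasDerivAt F (f x) x)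
    (hfcont : ContinuousOn f (Set.Ioo a b))
    (hfpos : ∀ x ∈ Set.Ioo a b, 0 < f x)
    (hFlt : ∀ x ∈ Set.Ioo a b, F x < 1)
    (hhcont : ContinuousOn h (Set.Ioo a b))
    (hint : ∀ x ∈ Set.Ioo a b, IntervalIntegrable (fun u => h u * f u) volume x b)
    (hg : ∀ x, g x = (∫ u in x..b, h u * f u) / (1 - F x)) :
    ∃ g' : ℝ → ℝ, ∀ x ∈ Set.Ioo a b,
      HasDerivAt g (g' x) x ∧
      g x + g' x * ((x - (1 - F x) / f x) - x) = h x ∧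
      g x - g' x * ((1 - F x) / f x) = h x := by
  refine ⟨fun x => f x * (g x - h x) / (1 - F x), fun x hx => ?_⟩
  have hden : 1 - F x ≠ 0 := sub_ne_zero.mpr (hFlt x hx).ne'
  have hderiv : HasDerivAt g (f x * (g x - h x) / (1 - F x)) x := by
    have hquot := (hasDerivAt_integral_left_of_continuousOn (φ := fun u => h u * f u)
      isOpen_Ioo hx (hhcont.mul hfcont) (hint x hx)).div_one_sub (hFderiv x hx) hden
    convert hquot using 1
    · exact funext hg
    · rw [hg x]
      ring
  have hode : g x - f x * (g x - h x) / (1 - F x) * ((1 - F x) / f x) = h x := by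
    have hfx : f x ≠ 0 := (hfpos x hx).ne'
    field_simp
    ring
  refine ⟨hderiv, ?_, hode⟩
  rwa [sub_sub_cancel_left, mul_neg, ← sub_eq_add_neg]

/-- The shading function g(x) = (∫ₓᵇ h(u) f(u) du)/(1 - F(x)) solves the ODE
g(x) + g'(x)(φ(x) - x) = h(x), i.e. g(x) - g'(x)(1 - F(x))/f(x) = h(x), where
φ(x) = x - (1 - F(x))/f(x) is the virtual value. -/
theorem shading_ode_solution
    (a b : ℝ) (hab : a < b) (F f h g : ℝ → ℝ)
    (hFderiv : ∀ x ∈ Set.Ioo a b, HasDerivAt F (f x) x)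
    (hfcont : ContinuousOn f (Set.Ioo a b))
    (hfpos : ∀ x ∈ Set.Ioo a b, 0 < f x)
    (hFlt : ∀ x ∈ Set.Ioo a b, F x < 1)
    (hhcont : ContinuousOn h (Set.Ioo a b))
    (hint : ∀ x ∈ Set.Ioo a b, IntervalIntegrable (fun u => h u * f u) volume x b)
    (hg : ∀ x, g x = (∫ u in x..b, h u * f u) / (1 - F x)) :
    ∃ g' : ℝ → ℝ, ∀ x ∈ Set.Ioo a b,
      HasDerivAt g (g' x) x ∧
      g x + g' x * ((x - (1 - F x) / f x) - x) = h x ∧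
      g x - g' x * ((1 - F x) / f x) = h x :=
  shading_ode_solution_general a b F f h g hFderiv hfcont hfpos hFlt hhcont hint hg
end

section
/- Let K ≥ 1, let σ₁ > 0 and ξ₁ < 0 satisfy σ₁/(1 − ξ₁) = 1/K, and let X₁ have the generalized Pareto distribution GP(σ₁, ξ₁). Define Xₜ = (1/(1 − ξ₁))·(K/(K + 1))·X₁. Then Xₜ has the generalized Pareto distribution GP(σₜ, ξ₁) with σₜ = σ₁·K/((1 − ξ₁)(K + 1)), and its virtual value φₜ(x) = (1 − ξ₁)(x − σₜ/(1 − ξ₁)) satisfies, for every value x₁ ∈ [0, −σ₁/ξ₁] of X₁, φₜ((1/(1 − ξ₁))·(K/(K + 1))·x₁) = (x₁ − 1/K)/(1 + 1/K). -/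
open MeasureTheory

/-- Optimal shading for a GP(σ₁, ξ₁) bidder with mean σ₁/(1-ξ₁) = 1/K facing
K truthful Uniform[0,1] adversaries: Xₜ = (1/(1-ξ₁))·(K/(K+1))·X₁ is
GP(σₜ, ξ₁) with σₜ = σ₁K/((1-ξ₁)(K+1)), and its virtual value
φₜ(x) = (1-ξ₁)(x - σₜ/(1-ξ₁)) satisfies φₜ(xₜ) = (x₁ - 1/K)/(1 + 1/K). -/
theorem gp_optimal_shading_uniform_adversaries
    {Ω : Type*} [MeasurableSpace Ω] (μ : Measure Ω) [IsProbabilityMeasure μ]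
    (K : ℕ) (hK : 1 ≤ K) (σ₁ ξ₁ σₜ : ℝ) (hσ₁ : 0 < σ₁) (hξ₁ : ξ₁ < 0)
    (hmean : σ₁ / (1 - ξ₁) = 1 / K)
    (hσₜ : σₜ = σ₁ * K / ((1 - ξ₁) * (K + 1)))
    (X₁ : Ω → ℝ)
    (hX₁ : ∀ t ∈ Set.Icc (0 : ℝ) (-σ₁/ξ₁),
      μ {ω | X₁ ω ≥ t} = ENNReal.ofReal ((1 + ξ₁*t/σ₁) ^ (-1/ξ₁))) :
    (∀ t ∈ Set.Icc (0 : ℝ) (-σₜ/ξ₁),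
      μ {ω | (1/(1 - ξ₁)) * (K/(K+1)) * X₁ ω ≥ t}
        = ENNReal.ofReal ((1 + ξ₁*t/σₜ) ^ (-1/ξ₁))) ∧
    (∀ x₁ ∈ Set.Icc (0 : ℝ) (-σ₁/ξ₁),
      (1 - ξ₁) * ((1/(1 - ξ₁)) * (K/(K+1)) * x₁ - σₜ/(1 - ξ₁))
        = (x₁ - 1/K) / (1 + 1/K)) := by
  have hK0 : (0:ℝ) < K := by exact_mod_cast hK
  have h1ξ : (0:ℝ) < 1 - ξ₁ := by linarith
  set c : ℝ := (1/(1 - ξ₁)) * (K/(K+1)) with hc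
  have hc0 : 0 < c := mul_pos (by positivity) (by positivity)
  have hσc : σₜ = σ₁ * c := by
    rw [hσₜ, hc]; field_simp
  have hσₜ0 : 0 < σₜ := by rw [hσc]; positivity
  constructor
  · intro t ht
    obtain ⟨ht0, ht1⟩ := ht
    have hs : t/c ∈ Set.Icc (0 : ℝ) (-σ₁/ξ₁) := by
      constructor
      · positivity
      · rw [div_le_iff₀ hc0]
        have : -σ₁/ξ₁ * c = -σₜ/ξ₁ := by
          rw [hσc]; field_simp
        rw [this]; exact ht1
    have hset : {ω | c * X₁ ω ≥ t} = {ω | X₁ ω ≥ t/c} := by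
      ext ω
      simp only [Set.mem_setOf_eq, ge_iff_le, div_le_iff₀ hc0]
      rw [mul_comm]
    rw [hset, hX₁ (t/c) hs]
    congr 1
    have : 1 + ξ₁*(t/c)/σ₁ = 1 + ξ₁*t/σₜ := by
      rw [hσc]; field_simp
    rw [this]
  · intro x₁ _
    have hσval : σₜ = 1/(K+1) := by
      have h : σ₁ * K = 1 - ξ₁ := by
        field_simp at hmean; linarith
      rw [hσₜ, h]; field_simp
    have h1 : (1 - ξ₁) * (c * x₁ - σₜ/(1 - ξ₁)) = (K/(K+1))*x₁ - σₜ := by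
      rw [hc]; field_simp
    rw [h1, hσval]
    field_simp
end

section
/- Let K ≥ 2, let F be a CDF with positive continuous density f on (0, ω) with F(0) = 0 and F(ω) = 1, and let β(x) = (∫₀ˣ y·(K − 1)·F(y)^{K−2}·f(y) dy)/F(x)^{K−1} be the symmetric first-price equilibrium bid. Define the shading g(x) = (∫ₓ^ω β(u)·f(u) du)/(1 − F(x)) = E[β(X) | X ≥ x]. Then g is differentiable on (0, ω) and satisfies g(x) + g'(x)·(φ(x) − x) = β(x), where φ(x) = x − (1 − F(x))/f(x) is the virtual value; i.e., a bidder shading her value x₁ to g(x₁) submits a bid whose virtual value equals her first-price bid β(x₁). -/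
/-!
Writing `g = H / (1 - F)` with `H x = ∫ₓ^b β f`, the quotient rule gives
`g' = f / (1 - F) · (g - β)`: the hazard rate times the gap between the conditional mean and `β`.
Since `φ(x) - x = -(1 - F x) / f x` is the reciprocal of minus the hazard rate, the virtual value
of the shaded bid is `g - (g - β) = β`. Differentiability of `H` only needs `β f` continuous on
`(0, b)`, which holds because the numerator of `β` is a primitive of a function continuous there.
-/

open MeasureTheory intervalIntegral Filter Topology Set

/-- Continuity holds even when `f` is not integrable near `a`: the primitive is then locally `0`. -/
theorem continuousAt_integral_of_continuousOn_Ioo {f : ℝ → ℝ} {a d x : ℝ}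
    (hf : ContinuousOn f (Ioo a d)) (hx : x ∈ Ioo a d) :
    ContinuousAt (fun t => ∫ y in a..t, f y) x := by
  obtain ⟨hax, hxd⟩ := hx
  obtain ⟨c, hac, hcx⟩ := exists_between hax
  have hnhds : Ioo c d ∈ 𝓝 x := Ioo_mem_nhds hcx hxd
  by_cases hint_ac : IntervalIntegrable f volume a c
  · have hint_ct : ∀ t ∈ Ioo c d, IntervalIntegrable f volume c t := by
      refine fun t ht => (hf.mono fun y hy => ?_).intervalIntegrable
      rw [uIcc_of_le ht.1.le] at hy
      exact ⟨hac.trans_le hy.1, hy.2.trans_lt ht.2⟩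
    have hprim : ContinuousAt (fun t => ∫ y in c..t, f y) x :=
      (integral_hasDerivAt_right (hint_ct x ⟨hcx, hxd⟩)
        (hf.stronglyMeasurableAtFilter isOpen_Ioo x ⟨hax, hxd⟩)
        (hf.continuousAt (Ioo_mem_nhds hax hxd))).continuousAt
    have hsplit : (fun t => (∫ y in a..c, f y) + ∫ y in c..t, f y) =ᶠ[𝓝 x]
        fun t => ∫ y in a..t, f y := by
      filter_upwards [hnhds] with t ht
      exact integral_add_adjacent_intervals hint_ac (hint_ct t ht)
    exact (continuousAt_const.add hprim).congr hsplit
  · refine continuousAt_const.congr (f := fun _ => (0 : ℝ)) ?_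
    filter_upwards [hnhds] with t ht
    refine (integral_undef fun h => hint_ac (h.mono_set (uIcc_subset_uIcc_left ?_))).symm
    rw [uIcc_of_le (hac.trans ht.1).le]
    exact ⟨hac.le, ht.1.le⟩

theorem hasDerivAt_tail_average {F f q : ℝ → ℝ} {x b : ℝ}
    (hF : HasDerivAt F (f x) x) (hq : IntervalIntegrable (fun u => q u * f u) volume x b)
    (hmeas : StronglyMeasurableAtFilter (fun u => q u * f u) (𝓝 x))
    (hcont : ContinuousAt (fun u => q u * f u) x) (hFx : F x ≠ 1) :
    HasDerivAt (fun t => (∫ u in t..b, q u * f u) / (1 - F t))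
      (f x / (1 - F x) * ((∫ u in x..b, q u * f u) / (1 - F x) - q x)) x := by
  have hD : (1 : ℝ) - F x ≠ 0 := sub_ne_zero.mpr hFx.symm
  refine ((integral_hasDerivAt_left hq hmeas hcont).div
    ((hasDerivAt_const x 1).sub hF) hD).congr_deriv ?_
  simp only [Pi.sub_apply]
  field_simp
  ring

theorem myerson_equilibrium_shading_general
    (K : ℕ) (b : ℝ) (F f β g : ℝ → ℝ)
    (hFderiv : ∀ x ∈ Set.Ioo (0 : ℝ) b, HasDerivAt F (f x) x)
    (hfcont : ContinuousOn f (Set.Ioo 0 b))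
    (hfpos : ∀ x ∈ Set.Ioo (0 : ℝ) b, 0 < f x)
    (hFpos : ∀ x ∈ Set.Ioo (0 : ℝ) b, 0 < F x)
    (hFlt : ∀ x ∈ Set.Ioo (0 : ℝ) b, F x < 1)
    (hβ : ∀ x, β x = (∫ y in (0 : ℝ)..x, y * ((K : ℝ) - 1) * F y ^ (K - 2) * f y)
        / F x ^ (K - 1))
    (hint : ∀ x ∈ Set.Ioo (0 : ℝ) b,
      IntervalIntegrable (fun u => β u * f u) volume x b)
    (hg : ∀ x, g x = (∫ u in x..b, β u * f u) / (1 - F x)) :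
    ∃ g' : ℝ → ℝ, ∀ x ∈ Set.Ioo (0 : ℝ) b,
      HasDerivAt g (g' x) x ∧
      g x + g' x * ((x - (1 - F x) / f x) - x) = β x := by
  have hFcont : ContinuousOn F (Ioo 0 b) := fun x hx =>
    (hFderiv x hx).continuousAt.continuousWithinAt
  have hβcont : ContinuousOn β (Ioo 0 b) := by
    rw [funext hβ]
    refine fun x hx => ContinuousAt.continuousWithinAt ?_
    refine .div (continuousAt_integral_of_continuousOn_Ioo ?_ hx)
      ((hFderiv x hx).continuousAt.pow _) (pow_ne_zero _ (hFpos x hx).ne')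
    exact ((continuousOn_id.mul continuousOn_const).mul (hFcont.pow _)).mul hfcont
  have hβf : ContinuousOn (fun u => β u * f u) (Ioo 0 b) := hβcont.mul hfcont
  refine ⟨fun x => f x / (1 - F x) * (g x - β x), fun x hx => ⟨?_, ?_⟩⟩
  · rw [funext hg]
    exact hasDerivAt_tail_average (hFderiv x hx) (hint x hx)
      (hβf.stronglyMeasurableAtFilter isOpen_Ioo x hx)
      (hβf.continuousAt (isOpen_Ioo.mem_nhds hx)) (hFlt x hx).ne
  · have hD : 1 - F x ≠ 0 := (sub_pos.mpr (hFlt x hx)).ne'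
    field_simp [(hfpos x hx).ne']
    ring

/-- Main equilibrium lemma: with β the symmetric first-price equilibrium bid and
shading g(x) = E[β(X) | X ≥ x], the virtual value of the shaded bid equals the
first-price bid: g(x) + g'(x)(φ(x) - x) = β(x), where φ(x) = x - (1-F(x))/f(x). -/
theorem myerson_equilibrium_shading
    (K : ℕ) (hK : 2 ≤ K) (b : ℝ) (hb : 0 < b) (F f β g : ℝ → ℝ)
    (hF0 : F 0 = 0) (hFb : F b = 1)
    (hFderiv : ∀ x ∈ Set.Ioo (0 : ℝ) b, HasDerivAt F (f x) x)
    (hfcont : ContinuousOn f (Set.Ioo 0 b))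
    (hfpos : ∀ x ∈ Set.Ioo (0 : ℝ) b, 0 < f x)
    (hFpos : ∀ x ∈ Set.Ioo (0 : ℝ) b, 0 < F x)
    (hFlt : ∀ x ∈ Set.Ioo (0 : ℝ) b, F x < 1)
    (hβ : ∀ x, β x = (∫ y in (0 : ℝ)..x, y * ((K : ℝ) - 1) * F y ^ (K - 2) * f y)
        / F x ^ (K - 1))
    (hint : ∀ x ∈ Set.Ioo (0 : ℝ) b,
      IntervalIntegrable (fun u => β u * f u) volume x b)
    (hg : ∀ x, g x = (∫ u in x..b, β u * f u) / (1 - F x)) :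
    ∃ g' : ℝ → ℝ, ∀ x ∈ Set.Ioo (0 : ℝ) b,
      HasDerivAt g (g' x) x ∧
      g x + g' x * ((x - (1 - F x) / f x) - x) = β x :=
  myerson_equilibrium_shading_general K b F f β g hFderiv hfcont hfpos hFpos hFlt hβ hint hg
end
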